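/- (Key step in the proof of Theorem 3.6: geometric decay of consecutive displacements under the implicit contraction.) Let Z be a nonempty set, G a multiplicative G_M-metric on Z, F : Z → Z, x₀ ∈ Z, η ∈ [0, 1/2), γ > 0, and set μ = η/(1−η). Assume that all Picard iterates x_j = F^j x₀ lie in the closed ball B̄(x₀, γ), and that for all x, y, z ∈ B̄(x₀, γ): G(Fx, Fy, Fz) ≤ M^η, where M = max{ G(x,y,z), G(x,Fx,Fx), G(y,Fy,Fy), G(x,Fy,Fy), min{G(z,Fx,Fx), G(x,z,z)} }. Then for every q ≥ 0 one has G(x_q, x_{q+1}, x_{q+1}) ≤ G(x₀, x₁, x₁)^{μ^q}. -/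

import Mathlib

/-!
Along the orbit, write `dₙ = G(xₙ, xₙ₊₁, xₙ₊₁)`. Feeding `x = xₙ`, `y = z = xₙ₊₁` into the implicit
contraction, every term of the maximum is at most `dₙ dₙ₊₁` (the only nontrivial one,
`G(xₙ, xₙ₊₂, xₙ₊₂)`, by the rectangular inequality through `xₙ₊₁`, and `dₖ ≥ 1`). Hence
`dₙ₊₁ ≤ (dₙ dₙ₊₁)^η`, i.e. `dₙ₊₁ ≤ dₙ^μ`, and iterating gives `dₙ ≤ d₀^(μⁿ)`.
-/

structure IsMultGMetric {Z : Type*} (G : Z → Z → Z → ℝ) : Prop where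
  pos : ∀ x y z, 0 < G x y z
  eq_one : ∀ x y z, x = y → y = z → G x y z = 1
  one_lt : ∀ x y, x ≠ y → 1 < G x x y
  le_of_ne : ∀ x y z, y ≠ z → G x x y ≤ G x y z
  perm : ∀ x y z, G x y z = G y z x
  swap : ∀ x y z, G x y z = G x z y
  rect : ∀ x y z t, G x y z ≤ G x t t * G t y z

def GMBall {Z : Type*} (G : Z → Z → Z → ℝ) (x₀ : Z) (γ : ℝ) : Set Z :=
  {ρ | G x₀ ρ ρ ≤ γ}

theorem Real.le_rpow_div_one_sub_of_le_mul_rpow {a b η : ℝ} (ha : 0 < a) (hb : 0 < b)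
    (hη : η < 1) (h : b ≤ (a * b) ^ η) : b ≤ a ^ (η / (1 - η)) := by
  have h1η : 0 < 1 - η := by linarith
  rw [← Real.log_le_log_iff hb (by positivity), Real.log_rpow ha, div_mul_eq_mul_div,
    le_div_iff₀ h1η]
  have hlog := Real.log_le_log hb h
  rw [Real.log_rpow (mul_pos ha hb), Real.log_mul ha.ne' hb.ne'] at hlog
  linarith

theorem le_rpow_pow_of_le_rpow {d : ℕ → ℝ} {μ : ℝ} (hd : ∀ n, 0 ≤ d n) (hμ : 0 ≤ μ)
    (hstep : ∀ n, d (n + 1) ≤ d n ^ μ) (n : ℕ) : d n ≤ d 0 ^ μ ^ n := by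
  induction n with
  | zero => simp
  | succ n ih =>
    calc d (n + 1) ≤ d n ^ μ := hstep n
      _ ≤ (d 0 ^ μ ^ n) ^ μ := Real.rpow_le_rpow (hd n) ih hμ
      _ = d 0 ^ μ ^ (n + 1) := by rw [← Real.rpow_mul (hd 0), pow_succ]

namespace IsMultGMetric

variable {Z : Type*} {G : Z → Z → Z → ℝ}

theorem one_le (hG : IsMultGMetric G) (x y : Z) : 1 ≤ G x y y := by
  rcases eq_or_ne x y with rfl | hxy
  · exact (hG.eq_one x x x rfl rfl).ge
  · rw [hG.perm]
    exact (hG.one_lt y x hxy.symm).le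

end IsMultGMetric

def IsImplicitContractionOn {Z : Type*} (G : Z → Z → Z → ℝ) (F : Z → Z) (S : Set Z) (η : ℝ) :
    Prop :=
  ∀ x ∈ S, ∀ y ∈ S, ∀ z ∈ S,
    G (F x) (F y) (F z) ≤
      (max (G x y z)
        (max (G x (F x) (F x))
          (max (G y (F y) (F y))
            (max (G x (F y) (F y))
              (min (G z (F x) (F x)) (G x z z)))))) ^ η

namespace IsImplicitContractionOn

variable {Z : Type*} {G : Z → Z → Z → ℝ} {F : Z → Z} {S : Set Z} {η : ℝ}

theorem le_rpow_step (hF : IsImplicitContractionOn G F S η) (hG : IsMultGMetric G)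
    (hη0 : 0 ≤ η) (hη1 : η < 1) {x : Z} (hx : x ∈ S) (hFx : F x ∈ S) :
    G (F x) (F (F x)) (F (F x)) ≤ G x (F x) (F x) ^ (η / (1 - η)) := by
  set d₀ := G x (F x) (F x)
  set d₁ := G (F x) (F (F x)) (F (F x))
  have hd₀ : d₀ ≤ d₀ * d₁ := le_mul_of_one_le_right (hG.pos _ _ _).le (hG.one_le _ _)
  have hd₁ : d₁ ≤ d₀ * d₁ := le_mul_of_one_le_left (hG.pos _ _ _).le (hG.one_le _ _)
  have hmax : max d₀ (max d₀ (max d₁ (max (G x (F (F x)) (F (F x)))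
      (min (G (F x) (F x) (F x)) d₀)))) ≤ d₀ * d₁ :=
    max_le hd₀ <| max_le hd₀ <| max_le hd₁ <|
      max_le (hG.rect _ _ _ (F x)) ((min_le_right _ _).trans hd₀)
  refine Real.le_rpow_div_one_sub_of_le_mul_rpow (hG.pos _ _ _) (hG.pos _ _ _) hη1 ?_
  calc d₁ ≤ _ := hF x hx (F x) hFx (F x) hFx
    _ ≤ (d₀ * d₁) ^ η := Real.rpow_le_rpow (hG.pos _ _ _ |>.le.trans (le_max_left _ _)) hmax hη0

end IsImplicitContractionOn

theorem geometric_decay_implicit_general {Z : Type*}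
    (G : Z → Z → Z → ℝ) (hG : IsMultGMetric G)
    (F : Z → Z) (x₀ : Z) (η γ μ : ℝ)
    (hη0 : 0 ≤ η) (hη1 : η < 1 / 2) (hμ : μ = η / (1 - η))
    (hball : ∀ j : ℕ, F^[j] x₀ ∈ GMBall G x₀ γ)
    (hcontr : ∀ x ∈ GMBall G x₀ γ, ∀ y ∈ GMBall G x₀ γ, ∀ z ∈ GMBall G x₀ γ,
      G (F x) (F y) (F z) ≤
        (max (G x y z)
          (max (G x (F x) (F x))
            (max (G y (F y) (F y))
              (max (G x (F y) (F y))
                (min (G z (F x) (F x)) (G x z z)))))) ^ η) :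
    ∀ q : ℕ, G (F^[q] x₀) (F^[q + 1] x₀) (F^[q + 1] x₀) ≤
      (G x₀ (F x₀) (F x₀)) ^ (μ ^ q) := by
  have hcontr : IsImplicitContractionOn G F (GMBall G x₀ γ) η := hcontr
  have hμ0 : 0 ≤ μ := hμ ▸ div_nonneg hη0 (by linarith)
  refine le_rpow_pow_of_le_rpow (fun n => (hG.pos _ _ _).le) hμ0 fun n => ?_
  have hstep := hcontr.le_rpow_step hG hη0 (by linarith) (hball n)
    (F.iterate_succ_apply' n x₀ ▸ hball (n + 1))
  simpa only [← Function.iterate_succ_apply' F, hμ] using hstep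

theorem geometric_decay_implicit {Z : Type*} [Nonempty Z]
    (G : Z → Z → Z → ℝ) (hG : IsMultGMetric G)
    (F : Z → Z) (x₀ : Z) (η γ μ : ℝ)
    (hη0 : 0 ≤ η) (hη1 : η < 1 / 2) (hμ : μ = η / (1 - η)) (hγ : 0 < γ)
    (hball : ∀ j : ℕ, F^[j] x₀ ∈ GMBall G x₀ γ)
    (hcontr : ∀ x ∈ GMBall G x₀ γ, ∀ y ∈ GMBall G x₀ γ, ∀ z ∈ GMBall G x₀ γ,
      G (F x) (F y) (F z) ≤
        (max (G x y z)
          (max (G x (F x) (F x))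
            (max (G y (F y) (F y))
              (max (G x (F y) (F y))
                (min (G z (F x) (F x)) (G x z z)))))) ^ η) :
    ∀ q : ℕ, G (F^[q] x₀) (F^[q + 1] x₀) (F^[q + 1] x₀) ≤
      (G x₀ (F x₀) (F x₀)) ^ (μ ^ q) :=
  geometric_decay_implicit_general G hG F x₀ η γ μ hη0 hη1 hμ hball hcontr
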